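/- The quantum relative entropy is jointly convex in its first argument with fixed second argument: for density matrices ρ₁, ρ₂, γ and p ∈ [0,1], D(pρ₁ + (1−p)ρ₂ ‖ γ) ≤ p D(ρ₁‖γ) + (1−p) D(ρ₂‖γ). -/

import Mathlib

open Matrix BigOperators Filter Finset
open scoped ComplexOrder

/-- Matrix logarithm of a Hermitian matrix via the functional calculus
(junk value `0` for non-Hermitian input). -/
noncomputable def mlog {ι : Type*} [Fintype ι] [DecidableEq ι]
    (A : Matrix ι ι ℂ) : Matrix ι ι ℂ :=
  if h : A.IsHermitian then h.cfc Real.log else 0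

/-- Quantum relative entropy `D(ξ‖ρ) = tr(ξ ln ξ) − tr(ξ ln ρ)`. -/
noncomputable def relEnt {ι : Type*} [Fintype ι] [DecidableEq ι]
    (ξ ρ : Matrix ι ι ℂ) : ℝ :=
  ((ξ * mlog ξ).trace - (ξ * mlog ρ).trace).re

/-- Von Neumann entropy `S(ρ) = −tr(ρ ln ρ)`. -/
noncomputable def vN {ι : Type*} [Fintype ι] [DecidableEq ι]
    (ρ : Matrix ι ι ℂ) : ℝ :=
  -((ρ * mlog ρ).trace).re

/-- A density matrix: positive semidefinite with unit trace. -/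
def IsDensity {ι : Type*} [Fintype ι] (ρ : Matrix ι ι ℂ) : Prop :=
  ρ.PosSemidef ∧ ρ.trace = 1

lemma traceCfc {n : ℕ} (A : Matrix (Fin n) (Fin n) ℂ) (hA : A.IsHermitian) (g : ℝ → ℝ) :
    (A * hA.cfc g).trace = ((∑ i, hA.eigenvalues i * g (hA.eigenvalues i) : ℝ) : ℂ) := by
  set U := (Matrix.IsHermitian.eigenvectorUnitary hA : Matrix (Fin n) (Fin n) ℂ) with hUdef
  have hU : star U * U = 1 :=
    (Matrix.mem_unitaryGroup_iff').mp (Matrix.IsHermitian.eigenvectorUnitary hA).2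
  set D : Matrix (Fin n) (Fin n) ℂ := Matrix.diagonal (RCLike.ofReal ∘ hA.eigenvalues) with hD
  set D' : Matrix (Fin n) (Fin n) ℂ :=
    Matrix.diagonal (RCLike.ofReal ∘ g ∘ hA.eigenvalues) with hD'
  have h1 : A * hA.cfc g = U * (D * D') * star U := by
    nth_rewrite 1 [hA.spectral_theorem]
    rw [Matrix.IsHermitian.cfc]
    simp only [Unitary.conjStarAlgAut_apply, Unitary.coe_star, Matrix.mul_assoc, ← hUdef, ← hD, ← hD']
    rw [← Matrix.mul_assoc (star U) U (D' * star U), hU, Matrix.one_mul]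
  rw [h1, Matrix.trace_mul_cycle, ← Matrix.mul_assoc, hU, Matrix.one_mul, hD, hD',
    Matrix.diagonal_mul_diagonal, Matrix.trace_diagonal]
  push_cast
  simp [mul_comm]

lemma entryConj {n : ℕ} (M : Matrix (Fin n) (Fin n) ℂ) (lam : Fin n → ℝ) (j : Fin n) :
    (star M * (Matrix.diagonal (RCLike.ofReal ∘ lam) : Matrix (Fin n) (Fin n) ℂ) * M) j j
      = ((∑ i, Complex.normSq (M i j) * lam i : ℝ) : ℂ) := by
  rw [Matrix.mul_assoc, Matrix.mul_apply]
  push_cast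
  refine Finset.sum_congr rfl fun k _ => ?_
  simp only [Matrix.diagonal_mul, Matrix.star_apply, Function.comp_apply, Complex.star_def]
  rw [Complex.normSq_eq_conj_mul_self]
  show (starRingEnd ℂ) (M k j) * ((lam k : ℂ) * M k j)
      = (starRingEnd ℂ) (M k j) * M k j * (lam k : ℂ)
  ring

lemma colSum {n : ℕ} (M : Matrix (Fin n) (Fin n) ℂ) (h1 : star M * M = 1) (j : Fin n) :
    ∑ i, Complex.normSq (M i j) = 1 := by
  have h : (star M * M) j j = (1 : Matrix (Fin n) (Fin n) ℂ) j j := by rw [h1]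
  simp only [Matrix.mul_apply, Matrix.star_apply, Matrix.one_apply_eq] at h
  have : ((∑ i, Complex.normSq (M i j) : ℝ) : ℂ) = 1 := by
    push_cast
    rw [← h]
    refine Finset.sum_congr rfl fun k _ => ?_
    rw [Complex.normSq_eq_conj_mul_self]; rfl
  exact_mod_cast this

lemma rowSum {n : ℕ} (M : Matrix (Fin n) (Fin n) ℂ) (h2 : M * star M = 1) (i : Fin n) :
    ∑ j, Complex.normSq (M i j) = 1 := by
  have h : (M * star M) i i = (1 : Matrix (Fin n) (Fin n) ℂ) i i := by rw [h2]
  simp only [Matrix.mul_apply, Matrix.star_apply, Matrix.one_apply_eq] at h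
  have : ((∑ j, Complex.normSq (M i j) : ℝ) : ℂ) = 1 := by
    push_cast
    rw [← h]
    refine Finset.sum_congr rfl fun k _ => ?_
    rw [Complex.normSq_eq_conj_mul_self, mul_comm]; rfl
  exact_mod_cast this

lemma jensenSum {n : ℕ} (M : Matrix (Fin n) (Fin n) ℂ) (h1 : star M * M = 1)
    (h2 : M * star M = 1) (lam : Fin n → ℝ) (hlam : ∀ i, 0 ≤ lam i) :
    ∑ j, (∑ i, Complex.normSq (M i j) * lam i) * Real.log (∑ i, Complex.normSq (M i j) * lam i)
      ≤ ∑ i, lam i * Real.log (lam i) := by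
  have step1 : ∀ j, (∑ i, Complex.normSq (M i j) * lam i) *
      Real.log (∑ i, Complex.normSq (M i j) * lam i)
      ≤ ∑ i, Complex.normSq (M i j) * (lam i * Real.log (lam i)) := by
    intro j
    have := Real.convexOn_mul_log.map_sum_le (t := Finset.univ)
      (w := fun i => Complex.normSq (M i j)) (p := lam)
      (fun i _ => Complex.normSq_nonneg _) (colSum M h1 j) (fun i _ => hlam i)
    simpa [smul_eq_mul] using this
  calc ∑ j, (∑ i, Complex.normSq (M i j) * lam i) *
        Real.log (∑ i, Complex.normSq (M i j) * lam i)
      ≤ ∑ j, ∑ i, Complex.normSq (M i j) * (lam i * Real.log (lam i)) :=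
        Finset.sum_le_sum fun j _ => step1 j
    _ = ∑ i, (∑ j, Complex.normSq (M i j)) * (lam i * Real.log (lam i)) := by
        rw [Finset.sum_comm]; simp [Finset.sum_mul]
    _ = ∑ i, lam i * Real.log (lam i) := by
        refine Finset.sum_congr rfl fun i _ => by rw [rowSum M h2 i, one_mul]

/-- Convexity of quantum relative entropy in the first argument:
`D(pρ₁ + (1−p)ρ₂ ‖ γ) ≤ p D(ρ₁‖γ) + (1−p) D(ρ₂‖γ)`. -/
theorem stmt2 {n : ℕ} (ρ₁ ρ₂ γ : Matrix (Fin n) (Fin n) ℂ)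
    (h₁ : IsDensity ρ₁) (h₂ : IsDensity ρ₂) (hγ : IsDensity γ) (hγpd : γ.PosDef)
    (p : ℝ) (hp0 : 0 ≤ p) (hp1 : p ≤ 1) :
    relEnt ((p : ℂ) • ρ₁ + ((1 - p : ℝ) : ℂ) • ρ₂) γ ≤
      p * relEnt ρ₁ γ + (1 - p) * relEnt ρ₂ γ := by
  have hH1 : ρ₁.IsHermitian := h₁.1.1
  have hH2 : ρ₂.IsHermitian := h₂.1.1
  set C : Matrix (Fin n) (Fin n) ℂ := (p : ℂ) • ρ₁ + ((1 - p : ℝ) : ℂ) • ρ₂ with hCdef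
  have hC : C.IsHermitian := by
    refine Matrix.IsHermitian.add ?_ ?_ <;>
    · rw [Matrix.IsHermitian, Matrix.conjTranspose_smul]
      simp [Complex.star_def, Complex.conj_ofReal, hH1.eq, hH2.eq]
  -- unitaries
  set V : Matrix (Fin n) (Fin n) ℂ := (Matrix.IsHermitian.eigenvectorUnitary hC :
    Matrix (Fin n) (Fin n) ℂ) with hVdef
  set U1 : Matrix (Fin n) (Fin n) ℂ := (Matrix.IsHermitian.eigenvectorUnitary hH1 :
    Matrix (Fin n) (Fin n) ℂ) with hU1def
  set U2 : Matrix (Fin n) (Fin n) ℂ := (Matrix.IsHermitian.eigenvectorUnitary hH2 :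
    Matrix (Fin n) (Fin n) ℂ) with hU2def
  have hVl : star V * V = 1 :=
    (Matrix.mem_unitaryGroup_iff').mp (Matrix.IsHermitian.eigenvectorUnitary hC).2
  have hVr : V * star V = 1 :=
    (Matrix.mem_unitaryGroup_iff).mp (Matrix.IsHermitian.eigenvectorUnitary hC).2
  have hU1l : star U1 * U1 = 1 :=
    (Matrix.mem_unitaryGroup_iff').mp (Matrix.IsHermitian.eigenvectorUnitary hH1).2
  have hU1r : U1 * star U1 = 1 :=
    (Matrix.mem_unitaryGroup_iff).mp (Matrix.IsHermitian.eigenvectorUnitary hH1).2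
  have hU2l : star U2 * U2 = 1 :=
    (Matrix.mem_unitaryGroup_iff').mp (Matrix.IsHermitian.eigenvectorUnitary hH2).2
  have hU2r : U2 * star U2 = 1 :=
    (Matrix.mem_unitaryGroup_iff).mp (Matrix.IsHermitian.eigenvectorUnitary hH2).2
  set M1 : Matrix (Fin n) (Fin n) ℂ := star U1 * V with hM1def
  set M2 : Matrix (Fin n) (Fin n) ℂ := star U2 * V with hM2def
  have hM1l : star M1 * M1 = 1 := by
    rw [hM1def, Matrix.star_mul, star_star, Matrix.mul_assoc,
      ← Matrix.mul_assoc U1 (star U1) V, hU1r, Matrix.one_mul, hVl]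
  have hM1r : M1 * star M1 = 1 := by
    rw [hM1def, Matrix.star_mul, star_star, Matrix.mul_assoc,
      ← Matrix.mul_assoc V (star V) U1, hVr, Matrix.one_mul, hU1l]
  have hM2l : star M2 * M2 = 1 := by
    rw [hM2def, Matrix.star_mul, star_star, Matrix.mul_assoc,
      ← Matrix.mul_assoc U2 (star U2) V, hU2r, Matrix.one_mul, hVl]
  have hM2r : M2 * star M2 = 1 := by
    rw [hM2def, Matrix.star_mul, star_star, Matrix.mul_assoc,
      ← Matrix.mul_assoc V (star V) U2, hVr, Matrix.one_mul, hU2l]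
  set lam1 := hH1.eigenvalues with hlam1def
  set lam2 := hH2.eigenvalues with hlam2def
  set mu := hC.eigenvalues with hmudef
  have hlam1 : ∀ i, 0 ≤ lam1 i := fun i => h₁.1.eigenvalues_nonneg i
  have hlam2 : ∀ i, 0 ≤ lam2 i := fun i => h₂.1.eigenvalues_nonneg i
  set a : Fin n → ℝ := fun j => ∑ i, Complex.normSq (M1 i j) * lam1 i with hadef
  set b : Fin n → ℝ := fun j => ∑ i, Complex.normSq (M2 i j) * lam2 i with hbdef
  have ha0 : ∀ j, 0 ≤ a j := fun j => Finset.sum_nonneg fun i _ =>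
    mul_nonneg (Complex.normSq_nonneg _) (hlam1 i)
  have hb0 : ∀ j, 0 ≤ b j := fun j => Finset.sum_nonneg fun i _ =>
    mul_nonneg (Complex.normSq_nonneg _) (hlam2 i)
  -- conjugated entries
  have key1 : ∀ j, (star V * ρ₁ * V) j j = ((a j : ℝ) : ℂ) := by
    intro j
    have h : star V * ρ₁ * V = star M1 *
        (Matrix.diagonal (RCLike.ofReal ∘ lam1) : Matrix (Fin n) (Fin n) ℂ) * M1 := by
      nth_rewrite 1 [hH1.spectral_theorem]
      rw [hM1def, Matrix.star_mul, star_star]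
      simp only [Unitary.conjStarAlgAut_apply, Unitary.coe_star, Matrix.mul_assoc, hlam1def, ← hU1def]
    rw [h, entryConj]
  have key2 : ∀ j, (star V * ρ₂ * V) j j = ((b j : ℝ) : ℂ) := by
    intro j
    have h : star V * ρ₂ * V = star M2 *
        (Matrix.diagonal (RCLike.ofReal ∘ lam2) : Matrix (Fin n) (Fin n) ℂ) * M2 := by
      nth_rewrite 1 [hH2.spectral_theorem]
      rw [hM2def, Matrix.star_mul, star_star]
      simp only [Unitary.conjStarAlgAut_apply, Unitary.coe_star, Matrix.mul_assoc, hlam2def, ← hU2def]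
    rw [h, entryConj]
  -- eigenvalues of C as convex combinations
  have keymu : ∀ j, mu j = p * a j + (1 - p) * b j := by
    intro j
    have hdiag : star V * C * V = Matrix.diagonal (RCLike.ofReal ∘ mu) :=
      by have := hC.conjStarAlgAut_star_eigenvectorUnitary
         simpa [Unitary.coe_star, hVdef] using this
    have hsplit : star V * C * V = (p : ℂ) • (star V * ρ₁ * V)
        + ((1 - p : ℝ) : ℂ) • (star V * ρ₂ * V) := by
      rw [hCdef]
      simp only [Matrix.mul_add, Matrix.add_mul, Matrix.mul_smul, Matrix.smul_mul]
    have := congrFun (congrFun (hdiag.symm.trans hsplit) j) j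
    simp only [Matrix.diagonal_apply_eq, Matrix.add_apply, Matrix.smul_apply,
      key1 j, key2 j, smul_eq_mul, Function.comp_apply] at this
    have this' : ((mu j : ℝ) : ℂ) = (p : ℂ) * ((a j : ℝ) : ℂ)
        + ((1 - p : ℝ) : ℂ) * ((b j : ℝ) : ℂ) := this
    have h2 : ((mu j : ℝ) : ℂ) = ((p * a j + (1 - p) * b j : ℝ) : ℂ) := by
      rw [this']; push_cast; ring
    exact_mod_cast h2
  -- pointwise convexity
  have hconv : ∀ j, mu j * Real.log (mu j)
      ≤ p * (a j * Real.log (a j)) + (1 - p) * (b j * Real.log (b j)) := by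
    intro j
    have h1p : (0:ℝ) ≤ 1 - p := by linarith
    have hab : p + (1 - p) = 1 := by ring
    have := Real.convexOn_mul_log.2 (Set.mem_Ici.mpr (ha0 j)) (Set.mem_Ici.mpr (hb0 j))
      hp0 h1p hab
    rw [keymu j]
    simpa [smul_eq_mul] using this
  -- the main sum inequality
  have hsum : ∑ j, mu j * Real.log (mu j)
      ≤ p * (∑ i, lam1 i * Real.log (lam1 i)) + (1 - p) * (∑ i, lam2 i * Real.log (lam2 i)) := by
    have j1 : ∑ j, a j * Real.log (a j) ≤ ∑ i, lam1 i * Real.log (lam1 i) :=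
      jensenSum M1 hM1l hM1r lam1 hlam1
    have j2 : ∑ j, b j * Real.log (b j) ≤ ∑ i, lam2 i * Real.log (lam2 i) :=
      jensenSum M2 hM2l hM2r lam2 hlam2
    calc ∑ j, mu j * Real.log (mu j)
        ≤ ∑ j, (p * (a j * Real.log (a j)) + (1 - p) * (b j * Real.log (b j))) :=
          Finset.sum_le_sum fun j _ => hconv j
      _ = p * (∑ j, a j * Real.log (a j)) + (1 - p) * (∑ j, b j * Real.log (b j)) := by
          rw [Finset.sum_add_distrib, Finset.mul_sum, Finset.mul_sum]
      _ ≤ _ := by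
          have h1p : (0:ℝ) ≤ 1 - p := by linarith
          exact add_le_add (mul_le_mul_of_nonneg_left j1 hp0)
            (mul_le_mul_of_nonneg_left j2 h1p)
  -- entropy terms
  have entC : ((C * mlog C).trace).re = ∑ j, mu j * Real.log (mu j) := by
    rw [show mlog C = hC.cfc Real.log from dif_pos hC, traceCfc C hC Real.log]
    simp
    rfl
  have ent1 : ((ρ₁ * mlog ρ₁).trace).re = ∑ i, lam1 i * Real.log (lam1 i) := by
    rw [show mlog ρ₁ = hH1.cfc Real.log from dif_pos hH1, traceCfc ρ₁ hH1 Real.log]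
    simp
    rfl
  have ent2 : ((ρ₂ * mlog ρ₂).trace).re = ∑ i, lam2 i * Real.log (lam2 i) := by
    rw [show mlog ρ₂ = hH2.cfc Real.log from dif_pos hH2, traceCfc ρ₂ hH2 Real.log]
    simp
    rfl
  -- cross term linearity
  have cross : ((C * mlog γ).trace).re
      = p * ((ρ₁ * mlog γ).trace).re + (1 - p) * ((ρ₂ * mlog γ).trace).re := by
    have : (C * mlog γ).trace = (p : ℂ) * (ρ₁ * mlog γ).trace
        + ((1 - p : ℝ) : ℂ) * (ρ₂ * mlog γ).trace := by
      rw [hCdef, Matrix.add_mul, Matrix.smul_mul, Matrix.smul_mul, Matrix.trace_add,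
        Matrix.trace_smul, Matrix.trace_smul, smul_eq_mul, smul_eq_mul]
    rw [this]
    simp [Complex.add_re, Complex.mul_re, Complex.ofReal_re, Complex.ofReal_im]
  -- assemble
  have lhs_eq : relEnt C γ = (∑ j, mu j * Real.log (mu j))
      - (p * ((ρ₁ * mlog γ).trace).re + (1 - p) * ((ρ₂ * mlog γ).trace).re) := by
    rw [relEnt, Complex.sub_re, entC, cross]
  have rhs1 : relEnt ρ₁ γ = (∑ i, lam1 i * Real.log (lam1 i)) - ((ρ₁ * mlog γ).trace).re := by
    rw [relEnt, Complex.sub_re, ent1]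
  have rhs2 : relEnt ρ₂ γ = (∑ i, lam2 i * Real.log (lam2 i)) - ((ρ₂ * mlog γ).trace).re := by
    rw [relEnt, Complex.sub_re, ent2]
  rw [lhs_eq, rhs1, rhs2]
  nlinarith [hsum]
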